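/- Assume θ_i = 0 for all i, common d^max > 0, and strictly increasing remaining metric m_i := (ξ_i ℓ_i)^{-1} - ε_i. Then the Nash equilibrium of the game is unique. -/

import Mathlib

open Finset

/-- Payoff with negligible unlearning costs (`θ_i = 0`). -/
noncomputable def payoff0 {I : ℕ} (ξ ℓ ε : Fin I → ℝ) (i : Fin I)
    (d : Fin I → ℝ) : ℝ :=
  Real.log (∑ j, d j + ε i) - ξ i * ℓ i * d i

/-- Nash equilibrium of the game with common maximum data size `dmax`. -/
def IsNash0 {I : ℕ} (ξ ℓ ε : Fin I → ℝ) (dmax : ℝ) (d : Fin I → ℝ) : Prop :=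
  ∀ i : Fin I, ∀ x ∈ Set.Icc (0 : ℝ) dmax,
    payoff0 ξ ℓ ε i (Function.update d i x) ≤ payoff0 ξ ℓ ε i d

open Set

/-!
Only the first-order conditions of each player's problem are needed. The marginal payoff of
player `i` is `(S + ε i)⁻¹ - ξ i ℓ i`, where `S` is the total contribution, so at an equilibrium
`d i < dmax` forces `m i ≤ S` and `0 < d i` forces `S ≤ m i`, with `m i = (ξ i ℓ i)⁻¹ - ε i`.
If two equilibria had totals `S < S'`, every player would contribute weakly less in the second
one, which is absurd; so the totals agree, and a player whose strategies differ must have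
`m i = S`. Injectivity of `m` leaves at most one such player, and equal totals pin down its
strategy as well.
-/

theorem IsLocalMaxOn.hasDerivWithinAt_mul_sub_nonpos {f : ℝ → ℝ} {s : Set ℝ} {f' y z : ℝ}
    (h : IsLocalMaxOn f s y) (hf : HasDerivWithinAt f f' s y) (hs : Convex ℝ s)
    (hy : y ∈ s) (hz : z ∈ s) : (z - y) * f' ≤ 0 := by
  simpa using h.hasFDerivWithinAt_nonpos hf.hasFDerivWithinAt
    (sub_mem_posTangentConeAt_of_segment_subset (hs.segment_subset hy hz))

theorem hasDerivAt_log_add_sub_mul {A c y : ℝ} (hy : y + A ≠ 0) :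
    HasDerivAt (fun x => Real.log (x + A) - c * x) ((y + A)⁻¹ - c) y := by
  have h := (((hasDerivAt_id y).add_const A).log hy).sub ((hasDerivAt_id y).const_mul c)
  simp only [id, one_div, mul_one] at h
  exact h

theorem payoff0_update {I : ℕ} (ξ ℓ ε : Fin I → ℝ) (i : Fin I) (d : Fin I → ℝ) (x : ℝ) :
    payoff0 ξ ℓ ε i (Function.update d i x) =
      Real.log (x + (∑ j, d j - d i + ε i)) - ξ i * ℓ i * x := by
  have hsum := sum_eq_add_sum_sdiff_singleton_of_mem (mem_univ i) d
  rw [payoff0, sum_update_of_mem (mem_univ i), Function.update_self]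
  congr 2
  linarith

theorem IsNash0.mul_marginal_nonpos {I : ℕ} {ξ ℓ ε : Fin I → ℝ} {dmax : ℝ} {d : Fin I → ℝ}
    (hne : IsNash0 ξ ℓ ε dmax d) (hε : ∀ i, 0 < ε i) (hd : ∀ i, d i ∈ Icc 0 dmax)
    (i : Fin I) {x : ℝ} (hx : x ∈ Icc 0 dmax) :
    (x - d i) * ((∑ j, d j + ε i)⁻¹ - ξ i * ℓ i) ≤ 0 := by
  set A := ∑ j, d j - d i + ε i
  have hA : d i + A = ∑ j, d j + ε i := by ring
  have hpos : 0 < ∑ j, d j + ε i :=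
    add_pos_of_nonneg_of_pos (sum_nonneg fun j _ => (hd j).1) (hε i)
  have hself := payoff0_update ξ ℓ ε i d (d i)
  rw [Function.update_eq_self] at hself
  have hmax : IsMaxOn (fun x => Real.log (x + A) - ξ i * ℓ i * x) (Icc 0 dmax) (d i) :=
    fun x hx => by
      have h := hne i x hx
      rwa [payoff0_update, hself] at h
  rw [← hA]
  exact hmax.localize.hasDerivWithinAt_mul_sub_nonpos
    (hasDerivAt_log_add_sub_mul (hA ▸ hpos.ne')).hasDerivWithinAt (convex_Icc 0 dmax) (hd i) hx

/-- The threshold form `d i = min b (max 0 (m i - ∑ j ≠ i, d j))` of the paper, written as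
complementary slackness with respect to the total `∑ j, d j`. -/
structure IsThresholdProfile {ι : Type*} [Fintype ι] (m : ι → ℝ) (b : ℝ) (d : ι → ℝ) :
    Prop where
  mem_Icc : ∀ i, d i ∈ Icc 0 b
  threshold_le_sum : ∀ i, d i < b → m i ≤ ∑ j, d j
  sum_le_threshold : ∀ i, 0 < d i → ∑ j, d j ≤ m i

namespace IsThresholdProfile

variable {ι : Type*} [Fintype ι] {m : ι → ℝ} {b : ℝ} {d d' : ι → ℝ}

theorem threshold_mem_Icc_of_lt (hP : IsThresholdProfile m b d)
    (hP' : IsThresholdProfile m b d') {i : ι} (h : d i < d' i) :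
    m i ∈ Icc (∑ j, d' j) (∑ j, d j) :=
  ⟨hP'.sum_le_threshold i ((hP.mem_Icc i).1.trans_lt h),
    hP.threshold_le_sum i (h.trans_le (hP'.mem_Icc i).2)⟩

theorem sum_le (hP : IsThresholdProfile m b d) (hP' : IsThresholdProfile m b d') :
    ∑ j, d j ≤ ∑ j, d' j := by
  by_contra! hlt
  refine hlt.not_ge (sum_le_sum fun i _ => ?_)
  by_contra! hi
  obtain ⟨h₁, h₂⟩ := hP'.threshold_mem_Icc_of_lt hP hi
  exact hlt.not_ge (h₁.trans h₂)

theorem threshold_eq_sum_of_ne (hP : IsThresholdProfile m b d)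
    (hP' : IsThresholdProfile m b d') {i : ι} (hi : d i ≠ d' i) : m i = ∑ j, d j := by
  have hS := le_antisymm (hP.sum_le hP') (hP'.sum_le hP)
  rcases hi.lt_or_gt with h | h
  · obtain ⟨h₁, h₂⟩ := hP.threshold_mem_Icc_of_lt hP' h
    linarith
  · obtain ⟨h₁, h₂⟩ := hP'.threshold_mem_Icc_of_lt hP h
    linarith

theorem eq (hm : Function.Injective m) (hP : IsThresholdProfile m b d)
    (hP' : IsThresholdProfile m b d') : d = d' := by
  funext i
  by_contra hi
  have hsupp : ∀ j ≠ i, d j - d' j = 0 := fun j hj => sub_eq_zero.2 <| by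
    by_contra hj'
    exact hj (hm ((hP.threshold_eq_sum_of_ne hP' hj').trans
      (hP.threshold_eq_sum_of_ne hP' hi).symm))
  have h := Fintype.sum_eq_single i hsupp
  rw [sum_sub_distrib, le_antisymm (hP.sum_le hP') (hP'.sum_le hP), sub_self] at h
  exact hi (sub_eq_zero.1 h.symm)

end IsThresholdProfile

theorem IsNash0.isThresholdProfile {I : ℕ} {ξ ℓ ε : Fin I → ℝ} {dmax : ℝ} {d : Fin I → ℝ}
    (hne : IsNash0 ξ ℓ ε dmax d) (hc : ∀ i, 0 < ξ i * ℓ i) (hε : ∀ i, 0 < ε i)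
    (hd : ∀ i, d i ∈ Icc 0 dmax) :
    IsThresholdProfile (fun i => (ξ i * ℓ i)⁻¹ - ε i) dmax d := by
  have hpos : ∀ i, 0 < ∑ j, d j + ε i := fun i =>
    add_pos_of_nonneg_of_pos (sum_nonneg fun j _ => (hd j).1) (hε i)
  refine ⟨hd, fun i hi => ?_, fun i hi => ?_⟩
  · have h := hne.mul_marginal_nonpos hε hd i (right_mem_Icc.2 ((hd i).1.trans hi.le))
    have h' := sub_nonpos.1 (nonpos_of_mul_nonpos_right h (sub_pos.2 hi))
    have := (inv_le_comm₀ (hpos i) (hc i)).1 h'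
    linarith
  · have h := hne.mul_marginal_nonpos hε hd i (left_mem_Icc.2 ((hd i).1.trans (hd i).2))
    have h' := sub_nonneg.1 (nonneg_of_mul_nonpos_right h (sub_neg.2 hi))
    have := (le_inv_comm₀ (hc i) (hpos i)).1 h'
    linarith

theorem stmt13_general (I : ℕ) (ξ ℓ ε : Fin I → ℝ) (dmax : ℝ)
    (hξ : ∀ i, 0 < ξ i) (hℓ : ∀ i, 0 < ℓ i) (hε : ∀ i, 0 < ε i)
    (horder : ∀ i k : Fin I, i < k →
      (ξ i * ℓ i)⁻¹ - ε i < (ξ k * ℓ k)⁻¹ - ε k)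
    (d d' : Fin I → ℝ)
    (hd : ∀ i, d i ∈ Set.Icc (0 : ℝ) dmax)
    (hd' : ∀ i, d' i ∈ Set.Icc (0 : ℝ) dmax)
    (hne : IsNash0 ξ ℓ ε dmax d) (hne' : IsNash0 ξ ℓ ε dmax d') :
    d = d' := by
  have hc : ∀ i, 0 < ξ i * ℓ i := fun i => mul_pos (hξ i) (hℓ i)
  have hm : StrictMono fun i => (ξ i * ℓ i)⁻¹ - ε i := fun i k h => horder i k h
  exact (hne.isThresholdProfile hc hε hd).eq hm.injective (hne'.isThresholdProfile hc hε hd')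

/-- Theorem 2, uniqueness: with negligible unlearning costs, common `d^max`,
and strictly increasing remaining metric `(ξ_i ℓ_i)⁻¹ - ε_i`, the Nash
equilibrium of the game is unique. -/
theorem stmt13 (I : ℕ) (ξ ℓ ε : Fin I → ℝ) (dmax : ℝ)
    (hξ : ∀ i, 0 < ξ i) (hℓ : ∀ i, 0 < ℓ i) (hε : ∀ i, 0 < ε i)
    (hdmax : 0 < dmax)
    (horder : ∀ i k : Fin I, i < k →
      (ξ i * ℓ i)⁻¹ - ε i < (ξ k * ℓ k)⁻¹ - ε k)
    (d d' : Fin I → ℝ)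
    (hd : ∀ i, d i ∈ Set.Icc (0 : ℝ) dmax)
    (hd' : ∀ i, d' i ∈ Set.Icc (0 : ℝ) dmax)
    (hne : IsNash0 ξ ℓ ε dmax d) (hne' : IsNash0 ξ ℓ ε dmax d') :
    d = d' :=
  stmt13_general I ξ ℓ ε dmax hξ hℓ hε horder d d' hd hd' hne hne'
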